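/- arXiv:2106.03325 — 2 statements merged into one kernel-verified Lean document; each statement's English description precedes it below -/
import Mathlib

section
/- Let C > 0, R > 0 and T0 ≥ 0. Suppose v1, v2 : ℝ → ℝ are differentiable and satisfy C·v1'(t) = -(v1(t) - v2(t))/R and C·v2'(t) = (v1(t) - v2(t))/R for all t. Then the energy sent by the first capacitor, ΔE_send := (C/2)·(v1(0)² - v1(T0)²), equals (1/8)·C·(v1(0) - v2(0))·(1 - exp(-2·T0/(C·R)))·((3·v1(0) + v2(0)) + (v1(0) - v2(0))·exp(-2·T0/(C·R))). -/
/-!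
The charge `C (v₁ + v₂)` is conserved, while the voltage difference `v₁ - v₂` obeys
`(v₁ - v₂)' = -(2 / (C R)) (v₁ - v₂)` and hence decays like `exp (-2 t / (C R))`.
Knowing the sum and the difference at `T0` gives `v₁ T0`, and the energy formula is then
an algebraic identity.
-/

open Real

theorem eq_mul_exp_of_deriv_eq_mul {f : ℝ → ℝ} {a : ℝ} (hf : Differentiable ℝ f)
    (hf' : ∀ t, deriv f t = a * f t) (t : ℝ) : f t = f 0 * exp (a * t) := by
  have hg : ∀ s, HasDerivAt (fun s => f s * exp (-(a * s))) 0 s := by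
    intro s
    have hexp : HasDerivAt (fun s => exp (-(a * s))) (exp (-(a * s)) * -a) s := by
      simpa using ((hasDerivAt_id s).const_mul a).neg.exp
    have hprod := (hf s).hasDerivAt.mul hexp
    rwa [hf', show a * f s * exp (-(a * s)) + f s * (exp (-(a * s)) * -a) = 0 by ring] at hprod
  have hconst := is_const_of_deriv_eq_zero (fun s => (hg s).differentiableAt)
    (fun s => (hg s).deriv) t 0
  simp only [mul_zero, neg_zero, exp_zero, mul_one] at hconst
  rw [← hconst, mul_assoc, ← exp_add, neg_add_cancel, exp_zero, mul_one]

section CapacitorExchange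

variable {C R : ℝ} {v1 v2 : ℝ → ℝ} (hC : C ≠ 0)
  (hd1 : Differentiable ℝ v1) (hd2 : Differentiable ℝ v2)
  (h1 : ∀ t, C * deriv v1 t = -(v1 t - v2 t) / R)
  (h2 : ∀ t, C * deriv v2 t = (v1 t - v2 t) / R)
include hC hd1 hd2 h1 h2

theorem add_eq_add_of_capacitor_exchange (t : ℝ) : v1 t + v2 t = v1 0 + v2 0 := by
  refine is_const_of_deriv_eq_zero (hd1.add hd2) (fun s => ?_) t 0
  have hC_deriv : C * (deriv v1 s + deriv v2 s) = 0 := by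
    rw [mul_add, h1, h2]; ring
  rw [deriv_add (hd1 s) (hd2 s)]
  exact (mul_eq_zero.mp hC_deriv).resolve_left hC

theorem sub_eq_mul_exp_of_capacitor_exchange (t : ℝ) :
    v1 t - v2 t = (v1 0 - v2 0) * exp (-2 * t / (C * R)) := by
  have hdecay : ∀ s, deriv (fun s => v1 s - v2 s) s = -(2 / (C * R)) * (v1 s - v2 s) := by
    intro s
    apply mul_left_cancel₀ hC
    rw [deriv_fun_sub (hd1 s) (hd2 s), mul_sub, h1, h2]
    field_simp
    ring
  refine (eq_mul_exp_of_deriv_eq_mul (f := fun s => v1 s - v2 s) (hd1.sub hd2) hdecay t).trans ?_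
  congr 2
  ring

end CapacitorExchange

theorem router_router_energy_sent_general
    (C R T0 : ℝ) (hC : 0 < C)
    (v1 v2 : ℝ → ℝ) (hd1 : Differentiable ℝ v1) (hd2 : Differentiable ℝ v2)
    (h1 : ∀ t, C * deriv v1 t = -(v1 t - v2 t) / R)
    (h2 : ∀ t, C * deriv v2 t = (v1 t - v2 t) / R) :
    (C / 2) * ((v1 0)^2 - (v1 T0)^2) =
      (1/8) * C * (v1 0 - v2 0) * (1 - Real.exp (-2 * T0 / (C * R))) *
        ((3 * v1 0 + v2 0) + (v1 0 - v2 0) * Real.exp (-2 * T0 / (C * R))) := by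
  have hsum := add_eq_add_of_capacitor_exchange hC.ne' hd1 hd2 h1 h2 T0
  have hdiff := sub_eq_mul_exp_of_capacitor_exchange hC.ne' hd1 hd2 h1 h2 T0
  have hv1 : v1 T0 = ((v1 0 + v2 0) + (v1 0 - v2 0) * exp (-2 * T0 / (C * R))) / 2 := by
    linarith
  rw [hv1]
  ring

theorem router_router_energy_sent
    (C R T0 : ℝ) (hC : 0 < C) (hR : 0 < R) (hT0 : 0 ≤ T0)
    (v1 v2 : ℝ → ℝ) (hd1 : Differentiable ℝ v1) (hd2 : Differentiable ℝ v2)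
    (h1 : ∀ t, C * deriv v1 t = -(v1 t - v2 t) / R)
    (h2 : ∀ t, C * deriv v2 t = (v1 t - v2 t) / R) :
    (C / 2) * ((v1 0)^2 - (v1 T0)^2) =
      (1/8) * C * (v1 0 - v2 0) * (1 - Real.exp (-2 * T0 / (C * R))) *
        ((3 * v1 0 + v2 0) + (v1 0 - v2 0) * Real.exp (-2 * T0 / (C * R))) :=
  router_router_energy_sent_general C R T0 hC v1 v2 hd1 hd2 h1 h2
end

section
/- Let C > 0, R > 0, T0 > 0 and initial voltages a > b > 0. Set x := exp(-2·T0/(C·R)), ΔE_loss := (1/4)·C·(a - b)²·(1 - x²), and ΔE_receive := (1/8)·C·(a - b)·(1 - x)·((a + 3·b) - (a - b)·x). Then ΔE_receive > 0 and the cost of the router-router connection satisfies ΔE_loss / ΔE_receive = 2·(v0 - 1)·(1 + x) / ((v0 + 3) - (v0 - 1)·x), where v0 := a/b. -/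
theorem router_router_cost
    (C R T0 : ℝ) (hC : 0 < C) (hR : 0 < R) (hT0 : 0 < T0)
    (a b : ℝ) (hab : b < a) (hb : 0 < b) :
    (1/8) * C * (a - b) * (1 - Real.exp (-2 * T0 / (C * R))) *
        ((a + 3 * b) - (a - b) * Real.exp (-2 * T0 / (C * R))) > 0 ∧
    ((1/4) * C * (a - b)^2 * (1 - (Real.exp (-2 * T0 / (C * R)))^2)) /
        ((1/8) * C * (a - b) * (1 - Real.exp (-2 * T0 / (C * R))) *
          ((a + 3 * b) - (a - b) * Real.exp (-2 * T0 / (C * R)))) =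
      2 * (a / b - 1) * (1 + Real.exp (-2 * T0 / (C * R))) /
        ((a / b + 3) - (a / b - 1) * Real.exp (-2 * T0 / (C * R))) := by
  set x := Real.exp (-2 * T0 / (C * R)) with hx
  have hx0 : 0 < x := Real.exp_pos _
  have hx1 : x < 1 := by
    rw [hx]
    apply Real.exp_lt_one_iff.mpr
    apply div_neg_of_neg_of_pos
    · linarith
    · positivity
  have hd : 0 < (a + 3 * b) - (a - b) * x := by
    nlinarith
  have hpos : (1/8) * C * (a - b) * (1 - x) * ((a + 3 * b) - (a - b) * x) > 0 := by
    apply mul_pos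
    apply mul_pos
    apply mul_pos
    apply mul_pos
    · norm_num
    · exact hC
    · linarith
    · linarith
    · exact hd
  refine ⟨hpos, ?_⟩
  have hd' : (a / b + 3) - (a / b - 1) * x = ((a + 3 * b) - (a - b) * x) / b := by
    field_simp
  have hd2 : 0 < (a + 3 * b - (a - b) * x) / b := by positivity
  rw [hd', div_eq_div_iff hpos.ne' hd2.ne']
  field_simp
  ring
end
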